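/- arXiv:2605.04403 — 3 statements merged into one kernel-verified Lean document; each statement's English description precedes it below -/
import Mathlib

section
/- For any two distinct points z₁ = e^{iθ₁} and z₂ = e^{iθ₂} on the unit circle, there exists a positive integer n₀ such that |z₁^{n₀} − z₂^{n₀}| > √2. -/
/-- Helper: for `0 < φ ≤ π` there is `n ≥ 1` with `cos (n * φ) < 0`. -/
lemma exists_cos_nsmul_neg {φ : ℝ} (h0 : 0 < φ) (hπ : φ ≤ Real.pi) :
    ∃ n : ℕ, 0 < n ∧ Real.cos (n * φ) < 0 := by
  rcases le_or_gt φ (Real.pi / 2) with hφ | hφ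
  · set x : ℝ := Real.pi / 2 / φ with hx
    refine ⟨Nat.floor x + 1, Nat.succ_pos _, ?_⟩
    have hxpos : 0 ≤ x := by positivity
    have hxφ : x * φ = Real.pi / 2 := by
      rw [hx]; field_simp
    have hlt : x < (Nat.floor x : ℝ) + 1 := Nat.lt_floor_add_one x
    have hfl : (Nat.floor x : ℝ) ≤ x := Nat.floor_le hxpos
    have h1 : Real.pi / 2 < (Nat.floor x + 1 : ℕ) * φ := by
      push_cast
      nlinarith
    have h2 : (Nat.floor x + 1 : ℕ) * φ ≤ Real.pi := by
      push_cast
      nlinarith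
    exact Real.cos_neg_of_pi_div_two_lt_of_lt h1 (by linarith [Real.pi_pos])
  · exact ⟨1, one_pos, by
      rw [Nat.cast_one, one_mul]
      exact Real.cos_neg_of_pi_div_two_lt_of_lt hφ (by linarith [Real.pi_pos])⟩

/-- For any two distinct points `z₁, z₂` on the unit circle there is a positive integer `n₀`
with `|z₁ ^ n₀ - z₂ ^ n₀| > √2`. -/
theorem exists_pow_dist_gt_sqrt_two
    (z₁ z₂ : ℂ) (h₁ : ‖z₁‖ = 1) (h₂ : ‖z₂‖ = 1) (hne : z₁ ≠ z₂) :
    ∃ n₀ : ℕ, 0 < n₀ ∧ Real.sqrt 2 < ‖z₁ ^ n₀ - z₂ ^ n₀‖ := by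
  have hz₁ : z₁ ≠ 0 := by intro h; rw [h] at h₁; simp at h₁
  set w : ℂ := z₂ / z₁ with hw
  have hwnorm : ‖w‖ = 1 := by simp [hw, norm_div, h₁, h₂]
  have hwne : w ≠ 1 := by
    intro h
    apply hne
    have : z₂ = z₁ := by rw [hw, div_eq_one_iff_eq hz₁] at h; exact h
    exact this.symm
  have habs : ‖w‖ = 1 := hwnorm
  have hexp : w = Complex.exp (w.arg * Complex.I) := by
    conv_lhs => rw [← Complex.norm_mul_exp_arg_mul_I w]
    rw [habs, Complex.ofReal_one, one_mul]
  set θ := w.arg with hθ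
  have hθne : θ ≠ 0 := by
    intro h
    apply hwne
    rw [hexp, h]; simp
  have hθle : |θ| ≤ Real.pi := Complex.abs_arg_le_pi w
  have hθpos : 0 < |θ| := abs_pos.mpr hθne
  obtain ⟨n, hn, hcos⟩ := exists_cos_nsmul_neg hθpos hθle
  have hcosθ : Real.cos (n * θ) < 0 := by
    rcases abs_cases θ with ⟨h, _⟩ | ⟨h, _⟩
    · rwa [h] at hcos
    · rw [h] at hcos
      rw [show (n : ℝ) * θ = -((n : ℝ) * -θ) by ring, Real.cos_neg]
      exact hcos
  refine ⟨n, hn, ?_⟩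
  have hpow : z₁ ^ n - z₂ ^ n = z₁ ^ n * (1 - w ^ n) := by
    rw [hw, div_pow, mul_sub, mul_one, mul_div_assoc', mul_div_cancel_left₀ _ (pow_ne_zero n hz₁)]
  rw [hpow, norm_mul, norm_pow, h₁, one_pow, one_mul]
  have hwn : w ^ n = (Real.cos ((n : ℝ) * θ) : ℂ) + (Real.sin ((n : ℝ) * θ) : ℂ) * Complex.I := by
    rw [hexp, ← Complex.exp_nat_mul,
      show ((n : ℂ) * ((θ : ℂ) * Complex.I)) = (((n : ℝ) * θ : ℝ) : ℂ) * Complex.I by push_cast; ring,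
      Complex.exp_mul_I, ← Complex.ofReal_cos, ← Complex.ofReal_sin]
  rw [hwn]
  set c := Real.cos ((n : ℝ) * θ) with hc
  set s := Real.sin ((n : ℝ) * θ) with hs
  have hnormsq : Complex.normSq (1 - (Real.cos ((n : ℝ) * θ) + Real.sin ((n : ℝ) * θ) * Complex.I)) = 2 - 2 * c := by
    have hcs : c ^ 2 + s ^ 2 = 1 := by
      rw [hc, hs]; exact Real.cos_sq_add_sin_sq _
    simp [Complex.normSq_apply, Complex.add_re, Complex.add_im, ← hc, ← hs]
    nlinarith
  have : ‖1 - (Real.cos ((n : ℝ) * θ) + Real.sin ((n : ℝ) * θ) * Complex.I)‖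
      = Real.sqrt (2 - 2 * c) := by
    rw [Complex.norm_def, hnormsq]
  rw [this]
  exact Real.sqrt_lt_sqrt (by norm_num) (by linarith)
end

section
/- The space L^p_sot(𝕋, B(X,Y)) of (equivalence classes of) SOT measurable functions f : 𝕋 → B(X,Y) with z ↦ ‖f(z)‖ in L^p(𝕋), equipped with norm ‖f‖ = ‖ z ↦ ‖f(z)‖ ‖_{L^p(𝕋)}, is a complete normed space, for each 1 ≤ p ≤ ∞. -/
open MeasureTheory Filter Topology
open scoped ENNReal NNReal

noncomputable instance : MeasurableSpace Circle := borel Circle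
instance : BorelSpace Circle := ⟨rfl⟩

section Aux

variable {α : Type*} [MeasurableSpace α]
variable {X Y : Type*} [NormedAddCommGroup X] [NormedSpace ℂ X]
  [TopologicalSpace.SeparableSpace X]
  [NormedAddCommGroup Y] [NormedSpace ℂ Y]

/-- The operator enorm as a countable supremum over a dense sequence. -/
lemma enorm_op_eq_iSup (u : ℕ → X) (hu : DenseRange u) (T : X →L[ℂ] Y) :
    (⨆ n, (‖T (u n)‖₊ : ℝ≥0∞) / (‖u n‖₊ : ℝ≥0∞)) = (‖T‖₊ : ℝ≥0∞) := by
  have hle : (⨆ n, (‖T (u n)‖₊ : ℝ≥0∞) / (‖u n‖₊ : ℝ≥0∞)) ≤ (‖T‖₊ : ℝ≥0∞) := by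
    refine iSup_le fun n => ENNReal.div_le_of_le_mul ?_
    exact_mod_cast T.le_opNNNorm (u n)
  refine le_antisymm hle ?_
  set G := ⨆ n, (‖T (u n)‖₊ : ℝ≥0∞) / (‖u n‖₊ : ℝ≥0∞) with hGdef
  have hGfin : G ≠ ∞ := (lt_of_le_of_lt hle ENNReal.coe_lt_top).ne
  have hC : ∀ x : X, ‖T x‖ ≤ G.toReal * ‖x‖ := by
    have hclosed : IsClosed {x : X | ‖T x‖ ≤ G.toReal * ‖x‖} :=
      isClosed_le (T.continuous.norm) (continuous_const.mul continuous_norm)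
    have hrange : Set.range u ⊆ {x : X | ‖T x‖ ≤ G.toReal * ‖x‖} := by
      rintro _ ⟨n, rfl⟩
      by_cases h0 : u n = 0
      · simp [h0]
      · have hne : (‖u n‖₊ : ℝ≥0∞) ≠ 0 := by
          simpa using nnnorm_ne_zero_iff.mpr h0
        have hnt : (‖u n‖₊ : ℝ≥0∞) ≠ ∞ := ENNReal.coe_ne_top
        have hdiv : (‖T (u n)‖₊ : ℝ≥0∞) / (‖u n‖₊ : ℝ≥0∞) ≤ G := by
          rw [hGdef]
          exact le_iSup (fun n => (‖T (u n)‖₊ : ℝ≥0∞) / (‖u n‖₊ : ℝ≥0∞)) n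
        have hmul : (‖T (u n)‖₊ : ℝ≥0∞) ≤ G * (‖u n‖₊ : ℝ≥0∞) :=
          (ENNReal.div_le_iff hne hnt).mp hdiv
        have := ENNReal.toReal_mono (by
          exact ENNReal.mul_ne_top hGfin hnt) hmul
        simpa [ENNReal.toReal_mul] using this
    have : closure (Set.range u) ⊆ {x : X | ‖T x‖ ≤ G.toReal * ‖x‖} :=
      closure_minimal hrange hclosed
    intro x
    exact this (by rw [hu.closure_range]; trivial)
  have hTle : ‖T‖ ≤ G.toReal := T.opNorm_le_bound ENNReal.toReal_nonneg hC
  calc (‖T‖₊ : ℝ≥0∞) = ENNReal.ofReal ‖T‖ := (ofReal_norm T).symm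
    _ ≤ ENNReal.ofReal G.toReal := ENNReal.ofReal_le_ofReal hTle
    _ = G := ENNReal.ofReal_toReal hGfin

/-- SOT measurability implies measurability of the operator enorm (X separable). -/
lemma measurable_enorm_op (f : α → X →L[ℂ] Y)
    (hf : ∀ x : X, StronglyMeasurable fun z => f z x) :
    Measurable fun z => (‖f z‖₊ : ℝ≥0∞) := by
  haveI : Nonempty X := ⟨0⟩
  set u := TopologicalSpace.denseSeq X with hu
  have hud : DenseRange u := TopologicalSpace.denseRange_denseSeq X
  have heq : (fun z => (‖f z‖₊ : ℝ≥0∞)) =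
      fun z => ⨆ n, (‖f z (u n)‖₊ : ℝ≥0∞) / (‖u n‖₊ : ℝ≥0∞) :=
    funext fun z => (enorm_op_eq_iSup u hud (f z)).symm
  rw [heq]
  exact Measurable.iSup fun n => ((hf (u n)).enorm).div measurable_const

lemma stronglyMeasurable_norm_op (f : α → X →L[ℂ] Y)
    (hf : ∀ x : X, StronglyMeasurable fun z => f z x) :
    StronglyMeasurable fun z => ‖f z‖ := by
  have h := measurable_enorm_op f hf
  have heq : (fun z => ‖f z‖) = fun z => ((‖f z‖₊ : ℝ≥0∞)).toReal := by
    funext z; simp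
  rw [heq]
  exact h.ennreal_toReal.stronglyMeasurable

end Aux

/-- Completeness of `L^p_sot(𝕋, B(X,Y))` (`1 ≤ p ≤ ∞`): every Cauchy sequence of SOT
measurable operator-valued functions with `p`-integrable norms converges in the
`L^p_sot` norm to such a function. -/
theorem Lp_sot_complete
    {X Y : Type*} [NormedAddCommGroup X] [NormedSpace ℂ X]
    [TopologicalSpace.SeparableSpace X]
    [NormedAddCommGroup Y] [NormedSpace ℂ Y] [CompleteSpace Y]
    (μ : Measure Circle) [IsProbabilityMeasure μ]
    (p : ENNReal) (hp : 1 ≤ p)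
    (f : ℕ → Circle → X →L[ℂ] Y)
    (hmeas : ∀ n, ∀ x : X, StronglyMeasurable fun z => f n z x)
    (hnorm : ∀ n, eLpNorm (fun z => ‖f n z‖) p μ < ⊤)
    (hcauchy : ∀ ε : ENNReal, 0 < ε → ∃ N : ℕ, ∀ m n : ℕ, N ≤ m → N ≤ n →
      eLpNorm (fun z => ‖f m z - f n z‖) p μ < ε) :
    ∃ g : Circle → X →L[ℂ] Y,
      (∀ x : X, StronglyMeasurable fun z => g z x) ∧
      eLpNorm (fun z => ‖g z‖) p μ < ⊤ ∧
      Tendsto (fun n => eLpNorm (fun z => ‖f n z - g z‖) p μ) atTop (𝓝 0) := by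
  classical
  haveI : Nonempty (X →L[ℂ] Y) := ⟨0⟩
  -- measurability of norms of differences
  have hsmd : ∀ m n : ℕ, StronglyMeasurable fun z => ‖f m z - f n z‖ := fun m n =>
    stronglyMeasurable_norm_op (fun z => f m z - f n z)
      (fun x => (hmeas m x).sub (hmeas n x))
  have hmd : ∀ m n : ℕ, Measurable fun z => (‖f m z - f n z‖₊ : ℝ≥0∞) := fun m n =>
    measurable_enorm_op (fun z => f m z - f n z)
      (fun x => (hmeas m x).sub (hmeas n x))
  -- choose a rapidly Cauchy subsequence
  have hc : ∀ k : ℕ, ∃ N : ℕ, ∀ m n : ℕ, N ≤ m → N ≤ n →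
      eLpNorm (fun z => ‖f m z - f n z‖) p μ < (2 : ℝ≥0∞)⁻¹ ^ k := fun k =>
    hcauchy _ (ENNReal.pow_pos (ENNReal.inv_pos.mpr (by norm_num)) k)
  choose N hN using hc
  let v : ℕ → ℕ := fun k => Nat.rec (N 0) (fun k vk => max (vk + 1) (N (k + 1))) k
  have hv1 : ∀ k, N k ≤ v k := by
    intro k
    cases k with
    | zero => exact le_rfl
    | succ k => exact le_max_right _ _
  have hv2 : ∀ k, v k < v (k + 1) := fun k =>
    lt_of_lt_of_le (Nat.lt_succ_self _) (le_max_left _ _)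
  have hvmono : StrictMono v := strictMono_nat_of_lt_succ hv2
  have hvd : ∀ k, eLpNorm (fun z => ‖f (v (k + 1)) z - f (v k) z‖) p μ
      < (2 : ℝ≥0∞)⁻¹ ^ k := fun k =>
    hN k _ _ ((hv1 k).trans (hv2 k).le) (hv1 k)
  -- a.e. summability of the increments
  set D : ℕ → Circle → ℝ≥0∞ := fun k z => (‖f (v (k + 1)) z - f (v k) z‖₊ : ℝ≥0∞) with hD
  have hDm : ∀ k, Measurable (D k) := fun k => hmd _ _
  have hgeom : (∑' k : ℕ, (2 : ℝ≥0∞)⁻¹ ^ k) < ∞ := by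
    rw [ENNReal.tsum_geometric]
    refine ENNReal.inv_lt_top.mpr ?_
    rw [tsub_pos_iff_lt]
    exact ENNReal.inv_lt_one.mpr (by norm_num)
  have hint : ∀ k, (∫⁻ z, D k z ∂μ) ≤ (2 : ℝ≥0∞)⁻¹ ^ k := by
    intro k
    have h1 : (∫⁻ z, D k z ∂μ)
        = eLpNorm (fun z => ‖f (v (k + 1)) z - f (v k) z‖) 1 μ := by
      rw [eLpNorm_one_eq_lintegral_enorm]
      simp only [enorm_norm]
      rfl
    rw [h1]
    exact (eLpNorm_le_eLpNorm_of_exponent_le hp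
      (hsmd _ _).aestronglyMeasurable).trans (hvd k).le
  have htsum : (∫⁻ z, (∑' k, D k z) ∂μ) < ∞ := by
    rw [lintegral_tsum fun k => (hDm k).aemeasurable]
    exact lt_of_le_of_lt (ENNReal.tsum_le_tsum hint) hgeom
  set S : Set Circle := {z | (∑' k, D k z) < ∞} with hS
  have hSmeas : MeasurableSet S :=
    measurableSet_lt (Measurable.ennreal_tsum hDm) measurable_const
  have hSfull : ∀ᵐ z ∂μ, z ∈ S :=
    ae_lt_top (Measurable.ennreal_tsum hDm) htsum.ne
  -- on S, the subsequence converges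
  have hcauchyS : ∀ z ∈ S, ∃ L, Tendsto (fun k => f (v k) z) atTop (𝓝 L) := by
    intro z hz
    have hcs : CauchySeq fun k => f (v k) z := by
      refine cauchySeq_of_edist_le_of_tsum_ne_top (fun k => D k z) (fun k => ?_)
        (by exact hz.ne)
      rw [edist_eq_enorm_sub]
      refine le_of_eq ?_
      show ((‖f (v k) z - f (v (k + 1)) z‖₊ : ℝ≥0∞)) = (‖f (v (k + 1)) z - f (v k) z‖₊ : ℝ≥0∞)
      rw [← nnnorm_neg, neg_sub]
    exact cauchySeq_tendsto_of_complete hcs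
  -- define the limit function, forced to converge everywhere
  set F : ℕ → Circle → X →L[ℂ] Y := fun k => S.indicator (fun z => f (v k) z) with hF
  have htF : ∀ z, ∃ L, Tendsto (fun k => F k z) atTop (𝓝 L) := by
    intro z
    by_cases hz : z ∈ S
    · obtain ⟨L, hL⟩ := hcauchyS z hz
      refine ⟨L, ?_⟩
      have heq : (fun k => F k z) = fun k => f (v k) z :=
        funext fun k => Set.indicator_of_mem hz _
      rwa [heq]
    · refine ⟨0, ?_⟩
      have heq : (fun k => F k z) = fun _ => 0 :=
        funext fun k => Set.indicator_of_notMem hz _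
      rw [heq]; exact tendsto_const_nhds
  set g : Circle → X →L[ℂ] Y := fun z => limUnder atTop (fun k => F k z) with hg
  have htg : ∀ z, Tendsto (fun k => F k z) atTop (𝓝 (g z)) := by
    intro z
    obtain ⟨L, hL⟩ := htF z
    have : g z = L := hL.limUnder_eq
    rwa [this]
  have htgS : ∀ z ∈ S, Tendsto (fun k => f (v k) z) atTop (𝓝 (g z)) := by
    intro z hz
    have heq : (fun k => f (v k) z) = fun k => F k z :=
      (funext fun k => Set.indicator_of_mem hz _).symm
    rw [heq]; exact htg z
  -- SOT measurability of g
  have hgsm : ∀ x : X, StronglyMeasurable fun z => g z x := by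
    intro x
    have hFsm : ∀ k, StronglyMeasurable fun z => F k z x := by
      intro k
      have heq : (fun z => F k z x) = S.indicator (fun z => f (v k) z x) := by
        funext z
        by_cases hz : z ∈ S <;> simp [hF, hz]
      rw [heq]
      exact (hmeas (v k) x).indicator hSmeas
    refine stronglyMeasurable_of_tendsto atTop hFsm (tendsto_pi_nhds.mpr fun z => ?_)
    exact ((ContinuousLinearMap.apply ℂ Y x).continuous.tendsto (g z)).comp (htg z)
  -- the key estimate
  have key : ∀ ε : ℝ≥0∞, 0 < ε → ∃ M : ℕ, ∀ m, M ≤ m →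
      eLpNorm (fun z => ‖f m z - g z‖) p μ ≤ ε := by
    intro ε hε
    obtain ⟨M, hM⟩ := hcauchy (min ε 1) (lt_min hε zero_lt_one)
    refine ⟨M, fun m hm => ?_⟩
    have hlim : ∀ᵐ z ∂μ, Tendsto (fun k => ‖f m z - f (v k) z‖) atTop
        (𝓝 ‖f m z - g z‖) :=
      hSfull.mono fun z hz => (tendsto_const_nhds.sub (htgS z hz)).norm
    have hfatou := Lp.eLpNorm_lim_le_liminf_eLpNorm (μ := μ) (p := p)
      (f := fun k z => ‖f m z - f (v k) z‖)
      (fun k => (hsmd m (v k)).aestronglyMeasurable)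
      (fun z => ‖f m z - g z‖) hlim
    have hev : ∀ k, M ≤ k → eLpNorm (fun z => ‖f m z - f (v k) z‖) p μ ≤ min ε 1 := by
      intro k hk
      exact (hM m (v k) hm (hk.trans hvmono.le_apply)).le
    have hliminf : (atTop.liminf fun k =>
        eLpNorm (fun z => ‖f m z - f (v k) z‖) p μ) ≤ min ε 1 :=
      liminf_le_of_frequently_le' ((eventually_atTop.mpr ⟨M, hev⟩).frequently)
    exact hfatou.trans (hliminf.trans (min_le_left _ _))
  refine ⟨g, hgsm, ?_, ?_⟩
  · obtain ⟨M, hM⟩ := key 1 zero_lt_one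
    have hsub : StronglyMeasurable fun z => ‖f M z - g z‖ :=
      stronglyMeasurable_norm_op _ (fun x => (hmeas M x).sub (hgsm x))
    have hfM : StronglyMeasurable fun z => ‖f M z‖ :=
      stronglyMeasurable_norm_op _ (hmeas M)
    have h1 : eLpNorm (fun z => ‖g z‖) p μ
        ≤ eLpNorm (fun z => ‖f M z - g z‖ + ‖f M z‖) p μ := by
      refine eLpNorm_mono fun z => ?_
      have h2 : ‖g z‖ - ‖f M z‖ ≤ ‖f M z - g z‖ := by
        rw [norm_sub_rev]; exact norm_sub_norm_le _ _
      have h3 : (0:ℝ) ≤ ‖f M z - g z‖ + ‖f M z‖ :=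
        add_nonneg (norm_nonneg _) (norm_nonneg _)
      rw [Real.norm_eq_abs, Real.norm_eq_abs, abs_of_nonneg (norm_nonneg _),
        abs_of_nonneg h3]
      linarith
    have h4 : eLpNorm (fun z => ‖f M z - g z‖ + ‖f M z‖) p μ
        ≤ eLpNorm (fun z => ‖f M z - g z‖) p μ + eLpNorm (fun z => ‖f M z‖) p μ :=
      eLpNorm_add_le hsub.aestronglyMeasurable hfM.aestronglyMeasurable hp
    refine lt_of_le_of_lt (h1.trans h4) ?_
    exact ENNReal.add_lt_top.mpr ⟨lt_of_le_of_lt (hM M le_rfl) ENNReal.one_lt_top,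
      hnorm M⟩
  · rw [ENNReal.tendsto_atTop_zero]
    intro ε hε
    obtain ⟨M, hM⟩ := key ε hε
    exact ⟨M, hM⟩
end

section
/- Let f : 𝕋 → B(ℓ²(𝕋)) be given by (f(z)x)(s) = x(z) if s = z and 0 otherwise. Then ‖f(z)‖ = 1 for all z ∈ 𝕋, while for every x ∈ ℓ²(𝕋), ζ ∈ 𝔻 and s ∈ 𝕋, (P_s[f](ζ)x)(s) = ∫_𝕋 P_ζ(z)(f(z)x)(s) dm(z) = 0; i.e., the strong Poisson integral of f is identically zero even though f has norm 1 almost everywhere. In particular the map f ↦ P_s[f] is not injective (not an isometry) on functions valued in B(ℓ²(𝕋)). -/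
open scoped Classical

open MeasureTheory
open scoped ENNReal

/-- The Poisson kernel `P_ζ(z) = (1 - |ζ|²)/|z - ζ|²`. -/
noncomputable def poissonKernelCircle (ζ : ℂ) (z : Circle) : ℝ :=
  (1 - ‖ζ‖ ^ 2) / ‖(z : ℂ) - ζ‖ ^ 2

/-- For `f : 𝕋 → B(ℓ²(𝕋))` with `(f z x) s = x z` if `s = z` and `0` otherwise:
`‖f z‖ = 1` everywhere, yet every coordinate of the strong Poisson integral vanishes,
`∫ P_ζ(z) (f z x)(s) dm(z) = 0`; in particular `f` is not a.e. zero although `P_s[f] = 0`,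
so `f ↦ P_s[f]` is not injective. -/
theorem strong_poisson_integral_not_injective_nonseparable
    (μ : Measure Circle) [IsProbabilityMeasure μ] (hsing : ∀ z : Circle, μ {z} = 0)
    (f : Circle → (lp (fun _ : Circle => ℂ) 2 →L[ℂ] lp (fun _ : Circle => ℂ) 2))
    (hf : ∀ (z : Circle) (x : lp (fun _ : Circle => ℂ) 2) (s : Circle),
      (f z x) s = if s = z then x z else 0) :
    (∀ z : Circle, ‖f z‖ = 1) ∧
    (∀ (x : lp (fun _ : Circle => ℂ) 2) (ζ : ℂ), ‖ζ‖ < 1 → ∀ s : Circle,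
      ∫ z, (poissonKernelCircle ζ z : ℂ) * ((f z x) s) ∂μ = 0) ∧
    ¬ (∀ᵐ z ∂μ, f z = 0) := by
  have h2 : (0 : ℝ) < (2 : ℝ≥0∞).toReal := by norm_num
  -- key: f z x = lp.single 2 z (x z)
  have key : ∀ (z : Circle) (x : lp (fun _ : Circle => ℂ) 2),
      f z x = lp.single 2 z (x z) := by
    intro z x
    apply lp.ext
    funext s
    rw [hf]
    by_cases h : s = z
    · subst h; simp [lp.single_apply_self]
    · simp [h, lp.single_apply_ne _ _ _ h]
  have hnorm : ∀ z : Circle, ‖f z‖ = 1 := by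
    intro z
    apply le_antisymm
    · apply ContinuousLinearMap.opNorm_le_bound _ zero_le_one
      intro x
      rw [key z x, one_mul]
      have := lp.norm_single (E := fun _ : Circle => ℂ) (p := 2) (by norm_num) z (x z)
      rw [this]
      exact lp.norm_apply_le_norm (by norm_num) x z
    · have e := lp.single (E := fun _ : Circle => ℂ) 2 z (1 : ℂ)
      have h1 : ‖lp.single (E := fun _ : Circle => ℂ) 2 z (1 : ℂ)‖ = 1 := by
        have := lp.norm_single (E := fun _ : Circle => ℂ) (p := 2) (by norm_num) z (1 : ℂ)
        simpa using this
      have h3 : ‖f z (lp.single 2 z (1 : ℂ))‖ = 1 := by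
        rw [key, lp.single_apply_self, h1]
      calc (1 : ℝ) = ‖f z (lp.single 2 z (1 : ℂ))‖ := h3.symm
        _ ≤ ‖f z‖ * ‖lp.single (E := fun _ : Circle => ℂ) 2 z (1 : ℂ)‖ :=
            (f z).le_opNorm _
        _ = ‖f z‖ := by rw [h1, mul_one]
  refine ⟨hnorm, ?_, ?_⟩
  · intro x ζ hζ s
    have hae : ∀ᵐ z ∂μ, (poissonKernelCircle ζ z : ℂ) * ((f z x) s) = 0 := by
      have : ∀ᵐ z ∂μ, z ≠ s := by
        rw [ae_iff]
        simpa using hsing s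
      filter_upwards [this] with z hz
      rw [hf]
      rw [if_neg (fun h => hz h.symm), mul_zero]
    rw [integral_congr_ae hae, integral_zero]
  · intro h
    have : (MeasureTheory.ae μ).NeBot := ae_neBot.mpr (IsProbabilityMeasure.ne_zero μ)
    obtain ⟨z, hz⟩ := h.exists
    have h1 := hnorm z
    rw [hz, norm_zero] at h1
    exact one_ne_zero h1.symm
end
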